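/- Let Γ = Pet^2 be the 20-vertex graph on vertices v_0,...,v_19 that is the edge-disjoint union of the Hamilton cycle Σ = (v_0 v_1 ... v_19), the pentagons P_0 = (v_0 v_4 v_8 v_12 v_16) and P_1 = (v_2 v_6 v_10 v_14 v_18), and the pentagrams Q_0 = (v_1 v_9 v_17 v_5 v_13) and Q_1 = (v_19 v_7 v_15 v_3 v_11). Then Γ is 4-regular and has girth 5. -/
import Mathlib


/-- The graph `Pet²`: edge-disjoint union of the Hamilton cycle `(v_0 … v_19)`,
the pentagons `(v_0 v_4 v_8 v_12 v_16)` and `(v_2 v_6 v_10 v_14 v_18)` (steps of 4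
on even vertices), and the pentagrams `(v_1 v_9 v_17 v_5 v_13)` and
`(v_19 v_7 v_15 v_3 v_11)` (steps of 8 on odd vertices). -/
def pet2 : SimpleGraph (ZMod 20) :=
  SimpleGraph.fromRel (fun u v =>
    v = u + 1 ∨ (u.val % 2 = 0 ∧ v = u + 4) ∨ (u.val % 2 = 1 ∧ v = u + 8))

noncomputable instance : DecidableRel pet2.Adj := Classical.decRel _

/-- Computable form of the base relation. -/
def pet2R (u v : ZMod 20) : Prop :=
  v = u + 1 ∨ (u.val % 2 = 0 ∧ v = u + 4) ∨ (u.val % 2 = 1 ∧ v = u + 8)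

instance : DecidableRel pet2R := fun u v => by unfold pet2R; infer_instance

/-- Computable form of the adjacency relation. -/
def padj (u v : ZMod 20) : Prop := u ≠ v ∧ (pet2R u v ∨ pet2R v u)

instance : DecidableRel padj := fun u v => by unfold padj; infer_instance

lemma pet2_adj (u v : ZMod 20) : pet2.Adj u v ↔ padj u v := by
  simp [pet2, SimpleGraph.fromRel_adj, padj, pet2R]

/-- Computable neighbourhood. -/
def pN (a : ZMod 20) : Finset (ZMod 20) := Finset.univ.filter (padj a)

lemma mem_pN {a b : ZMod 20} (h : padj a b) : b ∈ pN a := by simp [pN, h]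

lemma no_tri' : ∀ a : ZMod 20, ∀ b ∈ pN a, ∀ c ∈ pN b, padj c a → False := by decide

lemma no_sq' : ∀ a : ZMod 20, ∀ b ∈ pN a, ∀ c ∈ pN b, ∀ d ∈ pN c,
    a ≠ c → b ≠ d → padj d a → False := by decide

lemma card_pN : ∀ a : ZMod 20, (pN a).card = 4 := by decide

lemma short_cycle_false (a : ZMod 20) (w : pet2.Walk a a) (hw : w.IsCycle)
    (hlt : w.length < 5) : False := by
  have h3 := hw.three_le_length
  rcases w with _ | @⟨_, b, _, hab, p⟩
  · simp at h3
  rcases p with _ | @⟨_, c, _, hbc, p⟩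
  · simp at h3
  rcases p with _ | @⟨_, d, _, hcd, p⟩
  · simp at h3
  rcases p with _ | @⟨_, e, _, hde, p⟩
  · exact no_tri' a b (mem_pN ((pet2_adj _ _).1 hab)) c
      (mem_pN ((pet2_adj _ _).1 hbc)) ((pet2_adj _ _).1 hcd)
  rcases p with _ | @⟨_, f, _, hef, p⟩
  · -- square a b c d
    have hnd := hw.2
    simp [SimpleGraph.Walk.support_cons] at hnd
    exact no_sq' a b (mem_pN ((pet2_adj _ _).1 hab)) c
      (mem_pN ((pet2_adj _ _).1 hbc)) d (mem_pN ((pet2_adj _ _).1 hcd))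
      (fun h => hnd.2.1.2 h.symm) (fun h => hnd.1.2.1 h) ((pet2_adj _ _).1 hde)
  · simp [SimpleGraph.Walk.length_cons] at hlt
    omega

/-- The pentagon as an explicit 5-cycle. -/
def c5 : pet2.Walk 0 0 :=
  .cons ((pet2_adj 0 4).2 (by decide)) <|
  .cons ((pet2_adj 4 8).2 (by decide)) <|
  .cons ((pet2_adj 8 12).2 (by decide)) <|
  .cons ((pet2_adj 12 16).2 (by decide)) <|
  .cons ((pet2_adj 16 0).2 (by decide)) .nil

lemma c5_isCycle : c5.IsCycle := by
  rw [SimpleGraph.Walk.isCycle_def]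
  refine ⟨?_, by simp [c5], ?_⟩
  · rw [SimpleGraph.Walk.isTrail_def]
    decide
  · decide

lemma pet2_egirth : pet2.egirth = 5 := by
  refine le_antisymm ?_ ?_
  · have h1 : pet2.egirth ≤ (c5.length : ℕ∞) := by
      refine iInf_le_of_le 0 ?_
      refine iInf_le_of_le c5 ?_
      exact iInf_le _ c5_isCycle
    simpa [c5] using h1
  · rw [SimpleGraph.le_egirth]
    intro a w hw
    rcases Nat.lt_or_ge w.length 5 with h | h
    · exact absurd h (fun h => short_cycle_false a w hw h)
    · exact_mod_cast h

theorem stmt14 : (∀ v, pet2.degree v = 4) ∧ pet2.girth = 5 := by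
  constructor
  · intro v
    show (pet2.neighborFinset v).card = 4
    have h : pet2.neighborFinset v = pN v := by
      ext w
      simp [SimpleGraph.mem_neighborFinset, pet2_adj, pN]
    rw [h, card_pN]
  · rw [SimpleGraph.girth, pet2_egirth]
    rfl
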